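/- arXiv:2007.11152 — 2 statements merged into one kernel-verified Lean document; each statement's English description precedes it below -/
import Mathlib

section
/- Let ℓ: ℝ → ℝ be differentiable with ℓ'(u) < 0 for all u and ℓ' nondecreasing. For probabilities p_1 > p_2 ≥ 0 and the two-class risk R(f) = p_1·ℓ(f) + p_2·ℓ(−f) over f ∈ ℝ: every minimizer f* of R (when it exists), and more generally any f at which R is minimized over a bounded interval [−M, M], satisfies f* > 0. In particular sign(f*) agrees with the Bayes rule argmax of class probability. -/
open Set

/-!
Differentiating `R(f) = p₁ ℓ(f) + p₂ ℓ(-f)` gives `R'(f) = p₁ ℓ'(f) - p₂ ℓ'(-f)`. For `f ≤ 0`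
monotonicity of `ℓ'` gives `ℓ'(f) ≤ ℓ'(-f) < 0`, so `R'(f) ≤ (p₁ - p₂) ℓ'(f) < 0`. Hence `R`
strictly decreases to the right of any `f ≤ 0`, and since `f < M` such an `f` cannot minimize `R`
over `[-M, M]`.
-/

theorem IsMinOn.hasDerivAt_nonneg_of_mem_Ico {f : ℝ → ℝ} {f' a b x : ℝ}
    (hmin : IsMinOn f (Icc a b) x) (hx : x ∈ Ico a b) (hf : HasDerivAt f f' x) : 0 ≤ f' := by
  have hcone : b - x ∈ posTangentConeAt (Icc a b) x := by
    refine mem_posTangentConeAt_of_segment_subset ?_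
    rw [add_sub_cancel, segment_eq_Icc hx.2.le]
    exact Icc_subset_Icc_left hx.1
  have := hmin.localize.hasFDerivWithinAt_nonneg hf.hasFDerivAt.hasFDerivWithinAt hcone
  have h2 : 0 ≤ (b - x) * f' := by simpa using this
  exact nonneg_of_mul_nonneg_right h2 (sub_pos.2 hx.2)

def twoClassRisk (ℓ : ℝ → ℝ) (p₁ p₂ x : ℝ) : ℝ := p₁ * ℓ x + p₂ * ℓ (-x)

theorem hasDerivAt_twoClassRisk {ℓ : ℝ → ℝ} (hℓ : Differentiable ℝ ℓ) (p₁ p₂ x : ℝ) :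
    HasDerivAt (twoClassRisk ℓ p₁ p₂) (p₁ * deriv ℓ x - p₂ * deriv ℓ (-x)) x := by
  have hneg : HasDerivAt (fun y => ℓ (-y)) (deriv ℓ (-x) * -1) x :=
    (hℓ (-x)).hasDerivAt.comp x (hasDerivAt_neg x)
  exact (((hℓ x).hasDerivAt.const_mul p₁).add (hneg.const_mul p₂)).congr_deriv (by ring)

theorem twoClassRisk_deriv_neg_of_nonpos {ℓ' : ℝ → ℝ} (hneg : ∀ u, ℓ' u < 0) (hmono : Monotone ℓ')
    {p₁ p₂ x : ℝ} (hp₂ : 0 ≤ p₂) (hp : p₂ < p₁) (hx : x ≤ 0) :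
    p₁ * ℓ' x - p₂ * ℓ' (-x) < 0 := by
  have hle : ℓ' x ≤ ℓ' (-x) := hmono (by linarith)
  nlinarith [hneg x]

theorem stmt16_general (ℓ : ℝ → ℝ) (hdiff : Differentiable ℝ ℓ)
    (hneg : ∀ u : ℝ, deriv ℓ u < 0) (hmono : Monotone (deriv ℓ))
    (p₁ p₂ : ℝ) (hp₂ : 0 ≤ p₂) (hp : p₂ < p₁)
    (M : ℝ) (hM : 0 < M)
    (f : ℝ) (hf : f ∈ Set.Icc (-M) M)
    (hmin : ∀ g ∈ Set.Icc (-M) M, p₁ * ℓ f + p₂ * ℓ (-f) ≤ p₁ * ℓ g + p₂ * ℓ (-g)) :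
    0 < f := by
  by_contra! hf₀
  have hRmin : IsMinOn (twoClassRisk ℓ p₁ p₂) (Icc (-M) M) f := isMinOn_iff.2 hmin
  have hR' := hRmin.hasDerivAt_nonneg_of_mem_Ico ⟨hf.1, by linarith⟩
    (hasDerivAt_twoClassRisk hdiff p₁ p₂ f)
  exact (twoClassRisk_deriv_neg_of_nonpos hneg hmono hp₂ hp hf₀).not_ge hR'

/-- Fisher-consistency-type result for a two-class surrogate risk.
If ℓ is differentiable with ℓ' < 0 everywhere and ℓ' nondecreasing and p₁ > p₂ ≥ 0, then
any minimizer of R(f) = p₁ℓ(f) + p₂ℓ(−f) over [−M, M] is strictly positive. -/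
theorem stmt16 (ℓ : ℝ → ℝ) (hdiff : Differentiable ℝ ℓ)
    (hneg : ∀ u : ℝ, deriv ℓ u < 0) (hmono : Monotone (deriv ℓ))
    (p₁ p₂ : ℝ) (hp₂ : 0 ≤ p₂) (hp : p₂ < p₁) (hsum : p₁ + p₂ ≤ 1)
    (M : ℝ) (hM : 0 < M)
    (f : ℝ) (hf : f ∈ Set.Icc (-M) M)
    (hmin : ∀ g ∈ Set.Icc (-M) M, p₁ * ℓ f + p₂ * ℓ (-f) ≤ p₁ * ℓ g + p₂ * ℓ (-g)) :
    0 < f :=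
  stmt16_general ℓ hdiff hneg hmono p₁ p₂ hp₂ hp M hM f hf hmin
end

section
/- With ω_i = ω_1·δ^{1−i} (δ² ≥ 2√2+2) and ψ-values satisfying ω_{t} < ψ ≤ 2ω_{t}, the hierarchical property (H.S.1) holds for the dissimilarity in equation (4) in the following concrete case: for any layers with LLCA indices t̃ < t̃', and any node pairs at layers (m, l) and (m', l') respectively with t̃ < min(m,l), t̃' < min(m',l'), one has ψ_{t̃}² + ∑_{i=t̃+1}^{m−1}ω_i² + ∑_{i=t̃+1}^{l−1}ω_i² > ψ_{t̃'}² + ∑_{i=t̃'+1}^{m'−1}ω_i² + ∑_{i=t̃'+1}^{l'−1}ω_i², i.e., the squared dissimilarity with a smaller LLCA layer is strictly larger. -/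
/-! The squared weights `ω i ^ 2` form a geometric sequence of ratio `r = δ⁻²`. Measured against
`ω_t̃ ^ 2`, the pair with the deeper LLCA contributes at most `4r` through `ψ_t̃' ^ 2 ≤ 4 ω_t̃' ^ 2`
and at most `r² / (1 - r)` through each of its two geometric tails. The condition
`δ² ≥ 2√2 + 2` makes `4r + 2r² / (1 - r) ≤ 1`, so the whole is below `ω_t̃ ^ 2 < ψ_t̃ ^ 2`. -/

open Finset

lemma geom_sum_Icc_le_of_lt_one {r : ℝ} (hr0 : 0 ≤ r) (hr1 : r < 1) (a b : ℕ) :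
    ∑ i ∈ Icc a b, r ^ i ≤ r ^ a / (1 - r) := by
  rw [← Ico_add_one_right_eq_Icc]
  exact geom_sum_Ico_le_of_lt_one hr0 hr1

lemma four_mul_add_two_mul_geom_tail_le_one {r : ℝ} (hr0 : 0 ≤ r)
    (hr : r * (2 * Real.sqrt 2 + 2) ≤ 1) :
    4 * r + 2 * (r ^ 2 / (1 - r)) ≤ 1 := by
  set s := Real.sqrt 2
  have hs2 : s ^ 2 = 2 := Real.sq_sqrt (by norm_num)
  have hs0 : 0 ≤ s := Real.sqrt_nonneg 2
  have hr1 : r < 1 := by nlinarith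
  -- `(2s + 2)(2r² - 5r + 1) = (1 - r(2s + 2))(6 - 2r - s) + 3s - 4`, using `s² = 2`.
  have hquad : 0 ≤ 2 * r ^ 2 - 5 * r + 1 := by
    have hs : 4 ≤ 3 * s := by nlinarith
    refine nonneg_of_mul_nonneg_right (a := 2 * s + 2) ?_ (by positivity)
    nlinarith [mul_nonneg (sub_nonneg.2 hr) (by nlinarith : (0 : ℝ) ≤ 6 - 2 * r - s)]
  rw [← le_sub_iff_add_le', mul_div_assoc', div_le_iff₀ (by linarith)]
  linarith

lemma sq_eq_mul_inv_sq_pow_of_eq_div_pow {ω : ℕ → ℝ} {ω₁ δ : ℝ} (hδ : δ ≠ 0)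
    (hω : ∀ i, ω i = ω₁ / δ ^ (i - 1)) {i : ℕ} (hi : 1 ≤ i) :
    ω i ^ 2 = (ω₁ * δ) ^ 2 * (δ ^ 2)⁻¹ ^ i := by
  obtain ⟨j, rfl⟩ := Nat.exists_eq_add_of_le' hi
  rw [hω, Nat.add_sub_cancel, inv_pow, ← pow_mul]
  field_simp
  ring

theorem dissimilarity_lt_of_llca_lt {c r : ℝ} (hc : 0 ≤ c) (hr0 : 0 ≤ r)
    (hr : r * (2 * Real.sqrt 2 + 2) ≤ 1) {ω ψ : ℕ → ℝ}
    (hω : ∀ i, 1 ≤ i → ω i ^ 2 = c * r ^ i) (hψ : ∀ t, ω t < ψ t ∧ ψ t ≤ 2 * ω t)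
    {t t' : ℕ} (ht : 1 ≤ t) (htt' : t < t') (m l m' l' : ℕ) :
    ψ t' ^ 2 + ∑ i ∈ Icc (t' + 1) (m' - 1), ω i ^ 2 + ∑ i ∈ Icc (t' + 1) (l' - 1), ω i ^ 2 <
      ψ t ^ 2 + ∑ i ∈ Icc (t + 1) (m - 1), ω i ^ 2 + ∑ i ∈ Icc (t + 1) (l - 1), ω i ^ 2 := by
  have hr1 : r < 1 := by nlinarith [Real.sqrt_nonneg 2]
  have hω_pos (i : ℕ) : 0 < ω i := by linarith [hψ i]
  have hψ_shallow : c * r ^ t < ψ t ^ 2 := by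
    rw [← hω t ht]
    exact pow_lt_pow_left₀ (hψ t).1 (hω_pos t).le two_ne_zero
  have hψ_deep : ψ t' ^ 2 ≤ 4 * c * r ^ (t + 1) :=
    calc ψ t' ^ 2 ≤ (2 * ω t') ^ 2 := pow_le_pow_left₀ (by linarith [hψ t']) (hψ t').2 2
      _ = 4 * (c * r ^ t') := by rw [mul_pow, hω t' (by omega)]; norm_num
      _ ≤ 4 * c * r ^ (t + 1) := by
        rw [← mul_assoc]
        exact mul_le_mul_of_nonneg_left (pow_le_pow_of_le_one hr0 hr1.le htt') (by positivity)
  have htail (b : ℕ) : ∑ i ∈ Icc (t' + 1) b, ω i ^ 2 ≤ c * (r ^ (t + 2) / (1 - r)) :=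
    calc ∑ i ∈ Icc (t' + 1) b, ω i ^ 2 = c * ∑ i ∈ Icc (t' + 1) b, r ^ i := by
          rw [mul_sum]; exact sum_congr rfl fun i hi => hω i (le_trans (by omega) (mem_Icc.1 hi).1)
      _ ≤ c * (r ^ (t' + 1) / (1 - r)) :=
          mul_le_mul_of_nonneg_left (geom_sum_Icc_le_of_lt_one hr0 hr1 _ _) hc
      _ ≤ c * (r ^ (t + 2) / (1 - r)) := mul_le_mul_of_nonneg_left
          (div_le_div_of_nonneg_right (pow_le_pow_of_le_one hr0 hr1.le (by omega)) (by linarith)) hc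
  have hsum_nonneg (a b : ℕ) : 0 ≤ ∑ i ∈ Icc a b, ω i ^ 2 := sum_nonneg fun i _ => sq_nonneg _
  calc ψ t' ^ 2 + ∑ i ∈ Icc (t' + 1) (m' - 1), ω i ^ 2 + ∑ i ∈ Icc (t' + 1) (l' - 1), ω i ^ 2
      ≤ 4 * c * r ^ (t + 1) + 2 * (c * (r ^ (t + 2) / (1 - r))) := by
        linarith [htail (m' - 1), htail (l' - 1)]
    _ = c * r ^ t * (4 * r + 2 * (r ^ 2 / (1 - r))) := by ring
    _ ≤ c * r ^ t := mul_le_of_le_one_right (by positivity)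
        (four_mul_add_two_mul_geom_tail_le_one hr0 hr)
    _ < _ := by linarith [hsum_nonneg (t + 1) (m - 1), hsum_nonneg (t + 1) (l - 1)]

theorem stmt19_general (ω₁ δ : ℝ)
    (hδ2 : 2 * Real.sqrt 2 + 2 ≤ δ ^ 2)
    (ω : ℕ → ℝ) (hω : ∀ i : ℕ, ω i = ω₁ / δ ^ (i - 1))
    (ψ : ℕ → ℝ) (hψ : ∀ t : ℕ, ω t < ψ t ∧ ψ t ≤ 2 * ω t)
    (t t' m l m' l' : ℕ)
    (ht : 1 ≤ t) (htt' : t < t') :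
    ψ t' ^ 2 + ∑ i ∈ Finset.Icc (t' + 1) (m' - 1), ω i ^ 2 +
        ∑ i ∈ Finset.Icc (t' + 1) (l' - 1), ω i ^ 2 <
      ψ t ^ 2 + ∑ i ∈ Finset.Icc (t + 1) (m - 1), ω i ^ 2 +
        ∑ i ∈ Finset.Icc (t + 1) (l - 1), ω i ^ 2 := by
  have hδ2_pos : 0 < δ ^ 2 := lt_of_lt_of_le (by positivity) hδ2
  have hδ : δ ≠ 0 := (pow_ne_zero_iff two_ne_zero).1 hδ2_pos.ne'
  exact dissimilarity_lt_of_llca_lt (sq_nonneg (ω₁ * δ)) (inv_nonneg.2 hδ2_pos.le)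
    (inv_mul_le_one_of_le₀ hδ2 hδ2_pos.le) (fun i => sq_eq_mul_inv_sq_pow_of_eq_div_pow hδ hω)
    hψ ht htt' m l m' l'

/-- hierarchical property (H.S.1), concrete case. With ω_i = ω₁·δ^{1−i},
δ² ≥ 2√2 + 2, and ω_t < ψ_t ≤ 2·ω_t for every layer t, a pair of nodes whose LLCA is at a
strictly smaller layer t̃ < t̃' has strictly larger squared dissimilarity:
ψ_{t̃}² + ∑_{i=t̃+1}^{m−1} ω_i² + ∑_{i=t̃+1}^{l−1} ω_i²
  > ψ_{t̃'}² + ∑_{i=t̃'+1}^{m'−1} ω_i² + ∑_{i=t̃'+1}^{l'−1} ω_i². -/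
theorem stmt19 (k : ℕ) (ω₁ δ : ℝ) (hω₁ : 0 < ω₁) (hδ : 1 < δ)
    (hδ2 : 2 * Real.sqrt 2 + 2 ≤ δ ^ 2)
    (ω : ℕ → ℝ) (hω : ∀ i : ℕ, ω i = ω₁ / δ ^ (i - 1))
    (ψ : ℕ → ℝ) (hψ : ∀ t : ℕ, ω t < ψ t ∧ ψ t ≤ 2 * ω t)
    (t t' m l m' l' : ℕ)
    (ht : 1 ≤ t) (htt' : t < t')
    (hm : t < min m l) (hm' : t' < min m' l')
    (hk : m ≤ k ∧ l ≤ k ∧ m' ≤ k ∧ l' ≤ k) :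
    ψ t' ^ 2 + ∑ i ∈ Finset.Icc (t' + 1) (m' - 1), ω i ^ 2 +
        ∑ i ∈ Finset.Icc (t' + 1) (l' - 1), ω i ^ 2 <
      ψ t ^ 2 + ∑ i ∈ Finset.Icc (t + 1) (m - 1), ω i ^ 2 +
        ∑ i ∈ Finset.Icc (t + 1) (l - 1), ω i ^ 2 :=
  stmt19_general ω₁ δ hδ2 ω hω ψ hψ t t' m l m' l' ht htt'
end
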